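/- arXiv:2312.09048 — 3 statements merged into one kernel-verified Lean document; each statement's English description precedes it below -/
import Mathlib

section
/- Let w > 1 and let a < b be real numbers satisfying a - tanh(w·a) > b - tanh(w·b). Then: (set) for every x ∈ [-1,1] and every real v with v ≥ w·(b+1), tanh(w·x + v) ≥ tanh(w·b); (reset) for every x ∈ [-1,1] and every v with v ≤ w·(a-1), tanh(w·x + v) ≤ tanh(w·a); (read-high) for every x ∈ [tanh(w·b), 1] and every v with w·(b - tanh(w·b)) ≤ v ≤ w·(a - tanh(w·a)), tanh(w·x + v) ≥ tanh(w·b); (read-low) for every x ∈ [-1, tanh(w·a)] and every v with w·(b - tanh(w·b)) ≤ v ≤ w·(a - tanh(w·a)), tanh(w·x + v) ≤ tanh(w·a). Moreover tanh(w·a) < tanh(w·b), w·(a-1) < w·(b - tanh(w·b)), and w·(a - tanh(w·a)) < w·(b+1), so the state intervals X_low = [-1, tanh(w·a)] and X_high = [tanh(w·b), 1] are disjoint and the three input intervals (-∞, w·(a-1)], [w·(b - tanh(w·b)), w·(a - tanh(w·a))], [w·(b+1), +∞) are pairwise disjoint closed intervals of nonzero length. -/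
/-!
All four transitions only use that `tanh` is increasing: with `c` a bound on the state `x`, the
pre-activation `w * x + v` is pushed past `w * b` (resp. below `w * a`) as soon as the input `v`
exceeds `w * (b - c)` (resp. stays below `w * (a - c)`). For set/reset `c = ∓1`; for reading, `c`
is the end of the state interval itself, `tanh (w * b)` or `tanh (w * a)`. The input bands are
ordered because `tanh` takes values in `(-1, 1)`, and the read band is nonempty by `hcond`.
-/

open Real

namespace Real

theorem tanh_strictMono : StrictMono tanh := fun x y hxy => by
  by_contra! h
  have := artanh_le_artanh (neg_one_lt_tanh y) (tanh_lt_one x) h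
  rw [artanh_tanh, artanh_tanh] at this
  exact hxy.not_ge this

theorem tanh_le_tanh_mul_add_of_le {w b c x v : ℝ} (hw : 0 ≤ w) (hx : c ≤ x)
    (hv : w * (b - c) ≤ v) : tanh (w * b) ≤ tanh (w * x + v) :=
  tanh_strictMono.monotone <| by linarith [mul_le_mul_of_nonneg_left hx hw]

theorem tanh_mul_add_le_tanh_of_le {w a c x v : ℝ} (hw : 0 ≤ w) (hx : x ≤ c)
    (hv : v ≤ w * (a - c)) : tanh (w * x + v) ≤ tanh (w * a) :=
  tanh_strictMono.monotone <| by linarith [mul_le_mul_of_nonneg_left hx hw]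

end Real

theorem stmt1 (w a b : ℝ) (hw : 1 < w) (hab : a < b)
    (hcond : a - tanh (w * a) > b - tanh (w * b)) :
    (∀ x ∈ Set.Icc (-1 : ℝ) 1, ∀ v : ℝ, w * (b + 1) ≤ v →
      tanh (w * b) ≤ tanh (w * x + v)) ∧
    (∀ x ∈ Set.Icc (-1 : ℝ) 1, ∀ v : ℝ, v ≤ w * (a - 1) →
      tanh (w * x + v) ≤ tanh (w * a)) ∧
    (∀ x ∈ Set.Icc (tanh (w * b)) 1, ∀ v : ℝ,
      w * (b - tanh (w * b)) ≤ v → v ≤ w * (a - tanh (w * a)) →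
      tanh (w * b) ≤ tanh (w * x + v)) ∧
    (∀ x ∈ Set.Icc (-1 : ℝ) (tanh (w * a)), ∀ v : ℝ,
      w * (b - tanh (w * b)) ≤ v → v ≤ w * (a - tanh (w * a)) →
      tanh (w * x + v) ≤ tanh (w * a)) ∧
    tanh (w * a) < tanh (w * b) ∧
    w * (a - 1) < w * (b - tanh (w * b)) ∧
    w * (b - tanh (w * b)) < w * (a - tanh (w * a)) ∧
    w * (a - tanh (w * a)) < w * (b + 1) ∧
    Disjoint (Set.Icc (-1 : ℝ) (tanh (w * a))) (Set.Icc (tanh (w * b)) 1) ∧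
    Disjoint (Set.Iic (w * (a - 1)))
      (Set.Icc (w * (b - tanh (w * b))) (w * (a - tanh (w * a)))) ∧
    Disjoint (Set.Iic (w * (a - 1))) (Set.Ici (w * (b + 1))) ∧
    Disjoint (Set.Icc (w * (b - tanh (w * b))) (w * (a - tanh (w * a))))
      (Set.Ici (w * (b + 1))) := by
  have hw0 : 0 < w := by linarith
  have hstates : tanh (w * a) < tanh (w * b) := tanh_strictMono (mul_lt_mul_of_pos_left hab hw0)
  have hreset_read : w * (a - 1) < w * (b - tanh (w * b)) :=
    mul_lt_mul_of_pos_left (by linarith [tanh_lt_one (w * b)]) hw0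
  have hread : w * (b - tanh (w * b)) < w * (a - tanh (w * a)) :=
    mul_lt_mul_of_pos_left hcond hw0
  have hread_set : w * (a - tanh (w * a)) < w * (b + 1) :=
    mul_lt_mul_of_pos_left (by linarith [neg_one_lt_tanh (w * a)]) hw0
  refine ⟨fun x hx v hv => tanh_le_tanh_mul_add_of_le hw0.le hx.1 (by linarith),
    fun x hx v hv => tanh_mul_add_le_tanh_of_le hw0.le hx.2 hv,
    fun x hx v hv _ => tanh_le_tanh_mul_add_of_le hw0.le hx.1 hv,
    fun x hx v _ hv => tanh_mul_add_le_tanh_of_le hw0.le hx.2 hv,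
    hstates, hreset_read, hread, hread_set,
    (Set.Iic_disjoint_Ioi le_rfl).mono Set.Icc_subset_Iic_self
      (Set.Icc_subset_Ici_self.trans (Set.Ici_subset_Ioi.mpr hstates)),
    (Set.Iic_disjoint_Ioi le_rfl).mono_right
      (Set.Icc_subset_Ici_self.trans (Set.Ici_subset_Ioi.mpr hreset_read)),
    (Set.Iic_disjoint_Ioi le_rfl).mono_right
      (Set.Ici_subset_Ioi.mpr (hreset_read.trans (hread.trans hread_set))),
    (Set.Iic_disjoint_Ioi le_rfl).mono Set.Icc_subset_Iic_self
      (Set.Ici_subset_Ioi.mpr hread_set)⟩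
end

section
/- Let w > 0 be a real number, let (u_n)_{n ≥ 1} be a convergent sequence of real numbers, let x_0 ∈ [-1, +1], and define x_n = sgn(w·x_{n-1} + u_n) for every n ≥ 1, where sgn(t) = +1 if t ≥ 0 and sgn(t) = -1 if t < 0. Then the sequence (x_n)_{n ≥ 0} is convergent. -/
/-!
From the first step on, `x` takes only the values `±1`. Since `w > 0`, the limit `l` of `u`
satisfies `-w < l` or `l < w`. In the first case eventually `u > -w`, so the state `1` is
eventually absorbing (`w · 1 + u ≥ 0`); in the second, eventually `u < w` and `-1` is absorbing.
A two-valued sequence with an eventually absorbing value is eventually constant: either it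
enters that value late enough and stays there, or it keeps the other value forever.
-/

open Filter

/-- The sign function with the convention `sgn 0 = 1`:
`sgn t = +1` for `t ≥ 0` and `sgn t = -1` for `t < 0`. -/
noncomputable def sgn (t : ℝ) : ℝ := if 0 ≤ t then 1 else -1

lemma sgn_of_nonneg {t : ℝ} (h : 0 ≤ t) : sgn t = 1 := if_pos h

lemma sgn_of_neg {t : ℝ} (h : t < 0) : sgn t = -1 := if_neg (not_le.2 h)

lemma sgn_eq_one_or_eq_neg_one (t : ℝ) : sgn t = 1 ∨ sgn t = -1 := by
  unfold sgn
  split_ifs <;> simp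

lemma eventuallyConst_of_eventually_absorbing {α : Type*} {x : ℕ → α} {a b : α}
    (hab : ∀ᶠ n in atTop, x n = a ∨ x n = b)
    (habs : ∀ᶠ n in atTop, x n = a → x (n + 1) = a) :
    EventuallyConst x atTop := by
  obtain ⟨N, hN⟩ := eventually_atTop.1 (hab.and habs)
  have : Nonempty α := ⟨a⟩
  refine eventuallyConst_iff_exists_eventuallyEq.2 ?_
  by_cases henter : ∃ m ≥ N, x m = a
  · obtain ⟨m, hmN, hm⟩ := henter
    refine ⟨a, eventually_atTop.2 ⟨m, fun n hn => ?_⟩⟩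
    induction n, hn using Nat.le_induction with
    | base => exact hm
    | succ n hn ih => exact (hN n (hmN.trans hn)).2 ih
  · exact ⟨b, eventually_atTop.2 ⟨N, fun n hn =>
      (hN n hn).1.resolve_left fun hxa => henter ⟨n, hn, hxa⟩⟩⟩

theorem stmt3_general (w : ℝ) (hw : 0 < w) (u x : ℕ → ℝ)
    (hu : ∃ l : ℝ, Filter.Tendsto u Filter.atTop (nhds l))
    (hrec : ∀ n : ℕ, x (n + 1) = sgn (w * x n + u (n + 1))) :
    ∃ l : ℝ, Filter.Tendsto x Filter.atTop (nhds l) := by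
  obtain ⟨l, hl⟩ := hu
  have hpm : ∀ᶠ n in atTop, x n = 1 ∨ x n = -1 := by
    refine eventually_atTop.2 ⟨1, fun n hn => ?_⟩
    obtain ⟨m, rfl⟩ := Nat.exists_eq_add_of_le' hn
    exact hrec m ▸ sgn_eq_one_or_eq_neg_one _
  have hu_shift := (tendsto_add_atTop_iff_nat 1).2 hl
  have hconst : EventuallyConst x atTop := by
    by_cases hl_gt : -w < l
    · refine eventuallyConst_of_eventually_absorbing hpm ?_
      filter_upwards [hu_shift.eventually (lt_mem_nhds hl_gt)] with n hn hxn
      rw [hrec, hxn, mul_one]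
      exact sgn_of_nonneg (by linarith)
    · refine eventuallyConst_of_eventually_absorbing (hpm.mono fun _ => Or.symm) ?_
      filter_upwards [hu_shift.eventually (gt_mem_nhds (by linarith : l < w))] with n hn hxn
      rw [hrec, hxn]
      exact sgn_of_neg (by linarith)
  obtain ⟨c, hc⟩ := hconst.exists_tendsto
  exact ⟨c, hc.mono_right (pure_le_nhds c)⟩

theorem stmt3 (w : ℝ) (hw : 0 < w) (u x : ℕ → ℝ)
    (hu : ∃ l : ℝ, Filter.Tendsto u Filter.atTop (nhds l))
    (hx0 : x 0 ∈ Set.Icc (-1 : ℝ) 1)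
    (hrec : ∀ n : ℕ, x (n + 1) = sgn (w * x n + u (n + 1))) :
    ∃ l : ℝ, Filter.Tendsto x Filter.atTop (nhds l) :=
  stmt3_general w hw u x hu hrec
end

section
/- Let w < -1 and let a < b be real numbers satisfying a + tanh(w·a) > b + tanh(w·b). Then: (toggle low→high) for every x ∈ [-1, tanh(w·b)] and every real v with w·(a - tanh(w·b)) ≤ v ≤ w·(b - tanh(w·a)), tanh(w·x + v) ≥ tanh(w·a); (toggle high→low) for every x ∈ [tanh(w·a), 1] and every v with w·(a - tanh(w·b)) ≤ v ≤ w·(b - tanh(w·a)), tanh(w·x + v) ≤ tanh(w·b); (set) for every x ∈ [-1,1] and every v with v ≥ w·(a-1), tanh(w·x + v) ≥ tanh(w·a); (reset) for every x ∈ [-1,1] and every v with v ≤ w·(b+1), tanh(w·x + v) ≤ tanh(w·b). Moreover tanh(w·b) < tanh(w·a), w·(b+1) < w·(a - tanh(w·b)), w·(a - tanh(w·b)) < w·(b - tanh(w·a)), and w·(b - tanh(w·a)) < w·(a-1), so the state intervals X_low = [-1, tanh(w·b)] and X_high = [tanh(w·a), 1] are disjoint and the three input intervals are pairwise disjoint closed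 intervals of nonzero length. -/
/-!
Since `w < 0`, the pre-activation `w * x + v` is antitone in the state `x`, so on a state interval
`x ≤ c` (resp. `c ≤ x`) it is bounded below (resp. above) by `w * c + v`. Each transition then
reduces, via monotonicity of `tanh`, to comparing `w * c + v` with `w * a` or `w * b`; the input
bounds are chosen exactly so that this comparison holds. The separation of the intervals is a
sign computation: `a < b` and `-1 < tanh < 1` for the outer ones, and the hypothesis
`a + tanh (w * a) > b + tanh (w * b)` for the toggle interval to be nonempty.
-/

open Real Set

theorem Real.tanh_strictMono_s6 : StrictMono tanh := fun x y h => by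
  rwa [← artanh_lt_artanh_iff ⟨neg_one_lt_tanh x, tanh_lt_one x⟩
    ⟨neg_one_lt_tanh y, tanh_lt_one y⟩, artanh_tanh, artanh_tanh]

section NegativeWeight

variable {w x v c t : ℝ}

theorem tanh_mul_le_tanh_mul_add (hw : w ≤ 0) (hx : x ≤ c) (hv : w * (t - c) ≤ v) :
    tanh (w * t) ≤ tanh (w * x + v) := by
  have hwx : w * c ≤ w * x := mul_le_mul_of_nonpos_left hx hw
  exact tanh_strictMono_s6.monotone (by linarith)

theorem tanh_mul_add_le_tanh_mul (hw : w ≤ 0) (hx : c ≤ x) (hv : v ≤ w * (t - c)) :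
    tanh (w * x + v) ≤ tanh (w * t) := by
  have hwx : w * x ≤ w * c := mul_le_mul_of_nonpos_left hx hw
  exact tanh_strictMono_s6.monotone (by linarith)

end NegativeWeight

theorem stmt6 (w a b : ℝ) (hw : w < -1) (hab : a < b)
    (hcond : a + tanh (w * a) > b + tanh (w * b)) :
    (∀ x ∈ Set.Icc (-1 : ℝ) (tanh (w * b)), ∀ v : ℝ,
      w * (a - tanh (w * b)) ≤ v → v ≤ w * (b - tanh (w * a)) →
      tanh (w * a) ≤ tanh (w * x + v)) ∧
    (∀ x ∈ Set.Icc (tanh (w * a)) 1, ∀ v : ℝ,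
      w * (a - tanh (w * b)) ≤ v → v ≤ w * (b - tanh (w * a)) →
      tanh (w * x + v) ≤ tanh (w * b)) ∧
    (∀ x ∈ Set.Icc (-1 : ℝ) 1, ∀ v : ℝ, w * (a - 1) ≤ v →
      tanh (w * a) ≤ tanh (w * x + v)) ∧
    (∀ x ∈ Set.Icc (-1 : ℝ) 1, ∀ v : ℝ, v ≤ w * (b + 1) →
      tanh (w * x + v) ≤ tanh (w * b)) ∧
    tanh (w * b) < tanh (w * a) ∧
    w * (b + 1) < w * (a - tanh (w * b)) ∧
    w * (a - tanh (w * b)) < w * (b - tanh (w * a)) ∧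
    w * (b - tanh (w * a)) < w * (a - 1) ∧
    Disjoint (Set.Icc (-1 : ℝ) (tanh (w * b))) (Set.Icc (tanh (w * a)) 1) ∧
    Disjoint (Set.Iic (w * (b + 1)))
      (Set.Icc (w * (a - tanh (w * b))) (w * (b - tanh (w * a)))) ∧
    Disjoint (Set.Iic (w * (b + 1))) (Set.Ici (w * (a - 1))) ∧
    Disjoint (Set.Icc (w * (a - tanh (w * b))) (w * (b - tanh (w * a))))
      (Set.Ici (w * (a - 1))) := by
  have hw0 : w < 0 := by linarith
  have hta := tanh_lt_one (w * a)
  have htb := neg_one_lt_tanh (w * b)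
  have htba : tanh (w * b) < tanh (w * a) :=
    tanh_strictMono_s6 (mul_lt_mul_of_neg_left hab hw0)
  have hreset_toggle : w * (b + 1) < w * (a - tanh (w * b)) :=
    mul_lt_mul_of_neg_left (by linarith) hw0
  have htoggle : w * (a - tanh (w * b)) < w * (b - tanh (w * a)) :=
    mul_lt_mul_of_neg_left (by linarith) hw0
  have htoggle_set : w * (b - tanh (w * a)) < w * (a - 1) :=
    mul_lt_mul_of_neg_left (by linarith) hw0
  refine ⟨fun x hx v hv _ => tanh_mul_le_tanh_mul_add hw0.le hx.2 hv,
    fun x hx v _ hv => tanh_mul_add_le_tanh_mul hw0.le hx.1 hv,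
    fun x hx v hv => tanh_mul_le_tanh_mul_add hw0.le hx.2 hv,
    fun x hx v hv => tanh_mul_add_le_tanh_mul hw0.le hx.1 (by rwa [sub_neg_eq_add]),
    htba, hreset_toggle, htoggle, htoggle_set,
    (Iic_disjoint_Ici.2 htba.not_ge).mono Icc_subset_Iic_self Icc_subset_Ici_self,
    (Iic_disjoint_Ici.2 hreset_toggle.not_ge).mono_right Icc_subset_Ici_self,
    Iic_disjoint_Ici.2 (hreset_toggle.trans (htoggle.trans htoggle_set)).not_ge,
    (Iic_disjoint_Ici.2 htoggle_set.not_ge).mono_left Icc_subset_Iic_self⟩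
end
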